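/- For every odd integer d ≥ 5 and every integer s with 1 ≤ s ≤ d−3, there exists a d-regular connected Cayley graph G of order υ(G) such that λ'(G) = d+s < υ(G)/2. -/

import Mathlib

open SimpleGraph

section Defs

variable {V : Type*}

/-- The set of edges of `G` with one endpoint in `X` and the other outside `X`. -/
def edgeBoundary (G : SimpleGraph V) (X : Set V) : Set (Sym2 V) :=
  {e | e ∈ G.edgeSet ∧ ∃ u ∈ X, ∃ v ∈ Xᶜ, e = s(u, v)}

/-- The edge-connectivity `λ(G)`: the minimum number of edges whose removal disconnects `G`. -/
noncomputable def edgeConn (G : SimpleGraph V) : ℕ :=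
  sInf {k | ∃ F : Set (Sym2 V), F ⊆ G.edgeSet ∧ F.ncard = k ∧ ¬(G.deleteEdges F).Connected}

/-- `F` is a restricted edge-cut of `G`: removing `F` disconnects `G` and leaves no
isolated vertices. -/
def IsRestrictedEdgeCut (G : SimpleGraph V) (F : Set (Sym2 V)) : Prop :=
  F ⊆ G.edgeSet ∧ ¬(G.deleteEdges F).Connected ∧ ∀ v : V, ∃ w : V, (G.deleteEdges F).Adj v w

/-- The restricted edge-connectivity `λ'(G)`. -/
noncomputable def restrictedEdgeConn (G : SimpleGraph V) : ℕ :=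
  sInf {k | ∃ F : Set (Sym2 V), IsRestrictedEdgeCut G F ∧ F.ncard = k}

/-- The vertex-connectivity `κ(G)`: the minimum size of a set of vertices whose removal
leaves a disconnected graph or a graph with at most one vertex. -/
noncomputable def vertexConn (G : SimpleGraph V) : ℕ :=
  sInf {k | ∃ S : Set V, S.ncard = k ∧
    (¬(G.induce (Sᶜ : Set V)).Connected ∨ (Sᶜ : Set V).ncard ≤ 1)}

/-- The minimum edge-degree `ξ(G) = min {d(u) + d(v) - 2 : uv ∈ E(G)}`. -/
noncomputable def minEdgeDegree (G : SimpleGraph V) : ℕ :=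
  sInf {k | ∃ u v : V, G.Adj u v ∧ (G.neighborSet u).ncard + (G.neighborSet v).ncard - 2 = k}

/-- `G` is `λ'`-optimal if `λ'(G) = ξ(G)`. -/
def LambdaPrimeOptimal (G : SimpleGraph V) : Prop :=
  restrictedEdgeConn G = minEdgeDegree G

/-- The replacement product of `G1` and `G2` with respect to an edge-labelling `ℓ`,
where `ℓ x i` is the other endpoint of the edge of `G1` labelled `i` at the vertex `x`.
Vertices `(x, i)` and `(y, j)` are adjacent iff either `x = y` and `i j ∈ E(G2)`, or
`x y ∈ E(G1)` and the edge `x y` is labelled `i` at `x` and `j` at `y`. -/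
def replacementProduct {V1 V2 : Type*} (G1 : SimpleGraph V1) (G2 : SimpleGraph V2)
    (ℓ : V1 → V2 → V1) : SimpleGraph (V1 × V2) where
  Adj p q := (p.1 = q.1 ∧ G2.Adj p.2 q.2) ∨
    (G1.Adj p.1 q.1 ∧ ℓ p.1 p.2 = q.1 ∧ ℓ q.1 q.2 = p.1)
  symm := by
    constructor
    rintro p q (⟨h1, h2⟩ | ⟨h1, h2, h3⟩)
    · exact Or.inl ⟨h1.symm, h2.symm⟩
    · exact Or.inr ⟨h1.symm, h3, h2⟩
  loopless := by
    constructor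
    rintro p (⟨_, h⟩ | ⟨h, _⟩)
    · exact G2.ne_of_adj h rfl
    · exact G1.ne_of_adj h rfl

/-- `ℓ` is a valid edge-labelling of `G1` for the replacement product:
for each vertex `x`, `ℓ x` is injective and `ℓ x i` is always a neighbour of `x`
(hence `ℓ x` enumerates the neighbours of `x` when `G1` is `|V2|`-regular). -/
def IsRPLabelling {V1 V2 : Type*} (G1 : SimpleGraph V1) (ℓ : V1 → V2 → V1) : Prop :=
  (∀ x, Function.Injective (ℓ x)) ∧ ∀ x i, G1.Adj x (ℓ x i)

end Defs

/-- The (undirected) Cayley graph of a group `Γ` with connection set `S`: vertices are the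
elements of `Γ`, and distinct `x, y` are adjacent iff `x⁻¹ * y ∈ S` (or symmetrically
`y⁻¹ * x ∈ S`; when `S = S⁻¹` the two conditions agree). -/
def cayleyGraph {Γ : Type*} [Group Γ] (S : Set Γ) : SimpleGraph Γ where
  Adj x y := x ≠ y ∧ (x⁻¹ * y ∈ S ∨ y⁻¹ * x ∈ S)
  symm := by
    constructor
    rintro x y ⟨h1, h2⟩
    exact ⟨h1.symm, h2.symm⟩
  loopless := by
    constructor
    rintro x ⟨h, -⟩
    exact h rfl


/-!
The graph is a Cayley graph of the lamplighter group `C₂ ≀ C_c`, `c = d + s`, generated by the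
moves `g^{±1}, …, g^{±r}` of the lamplighter (`d = 2r + 1`) and the switch toggling the lamp at
his position. Its vertices fall into `2^c` clusters of fixed lamp configuration, each a copy of
the circulant `C_c(±1, …, ±r)`, joined by the perfect matching of switch edges; the `c` switch
edges leaving the cluster of the dark configuration form a restricted edge-cut.

Conversely, let `X` be a side of a restricted edge-cut. If `X` splits two clusters, each of them
contributes at least `2r ≥ c/2` circulant edges to the boundary. Otherwise every cluster but one,
`q`, lies inside or outside `X`; the switch edges leaving `X` are then counted by the edge
connectivity `c` of the hypercube of lamp configurations, up to a defect at `q` that the circulant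
edges inside `q` make up for.
-/

open Finset

local notation "C₂" => Multiplicative (ZMod 2)

section RestrictedCut

variable {V : Type*} {G : SimpleGraph V}

lemma mem_iff_of_deleteEdges_edgeBoundary_adj {X : Set V} {v w : V}
    (h : (G.deleteEdges (edgeBoundary G X)).Adj v w) : v ∈ X ↔ w ∈ X := by
  rw [SimpleGraph.deleteEdges_adj] at h
  by_contra hvw
  refine h.2 ⟨h.1, ?_⟩
  by_cases hv : v ∈ X
  · exact ⟨v, hv, w, fun hw => hvw (iff_of_true hv hw), rfl⟩
  · exact ⟨w, not_not.mp fun hw => hvw (iff_of_false hv hw), v, hv, Sym2.eq_swap⟩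

variable [Fintype V] [DecidableEq V] (G)

def IsRestrictedCutSide (X : Finset V) : Prop :=
  X.Nonempty ∧ Xᶜ.Nonempty ∧ (∀ v ∈ X, ∃ w ∈ X, G.Adj v w) ∧
    ∀ v ∉ X, ∃ w ∉ X, G.Adj v w

variable {G}

lemma IsRestrictedCutSide.compl {X : Finset V} (hX : IsRestrictedCutSide G X) :
    IsRestrictedCutSide G Xᶜ := by
  obtain ⟨hne, hne', hin, hout⟩ := hX
  refine ⟨hne', by rwa [compl_compl], fun v hv => ?_, fun v hv => ?_⟩
  · obtain ⟨w, hw, hvw⟩ := hout v (mem_compl.mp hv)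
    exact ⟨w, mem_compl.mpr hw, hvw⟩
  · obtain ⟨w, hw, hvw⟩ := hin v (by simpa using hv)
    exact ⟨w, by simpa using hw, hvw⟩

lemma IsRestrictedCutSide.one_lt_card {X : Finset V} (hX : IsRestrictedCutSide G X) :
    1 < #X := by
  obtain ⟨v, hv⟩ := hX.1
  obtain ⟨w, hw, hvw⟩ := hX.2.2.1 v hv
  exact Finset.one_lt_card.mpr ⟨v, hv, w, hw, hvw.ne⟩

lemma IsRestrictedCutSide.isRestrictedEdgeCut {X : Finset V} (hX : IsRestrictedCutSide G X) :
    IsRestrictedEdgeCut G (edgeBoundary G X) := by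
  obtain ⟨⟨x, hx⟩, ⟨y, hy⟩, hin, hout⟩ := hX
  have hreach : ∀ {v w}, (G.deleteEdges (edgeBoundary G X)).Reachable v w →
      (v ∈ (X : Set V) ↔ w ∈ (X : Set V)) := by
    rintro v w ⟨p⟩
    induction p with
    | nil => rfl
    | cons h _ ih => exact (mem_iff_of_deleteEdges_edgeBoundary_adj h).trans ih
  refine ⟨fun e he => he.1, fun hconn => ?_, fun v => ?_⟩
  · exact (mem_compl.mp hy) ((hreach (hconn.preconnected x y)).mp hx)
  · have hsame : ∀ w, G.Adj v w → (v ∈ X ↔ w ∈ X) →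
        (G.deleteEdges (edgeBoundary G X)).Adj v w := by
      rintro w hvw hiff
      refine SimpleGraph.deleteEdges_adj.mpr ⟨hvw, fun ⟨_, a, ha, b, hb, hab⟩ => ?_⟩
      rcases Sym2.eq_iff.mp hab with ⟨rfl, rfl⟩ | ⟨rfl, rfl⟩
      · exact hb (hiff.mp ha)
      · exact hb (hiff.mpr ha)
    by_cases hv : v ∈ X
    · obtain ⟨w, hw, hvw⟩ := hin v hv
      exact ⟨w, hsame w hvw (iff_of_true hv hw)⟩
    · obtain ⟨w, hw, hvw⟩ := hout v hv
      exact ⟨w, hsame w hvw (iff_of_false hv hw)⟩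

lemma IsRestrictedEdgeCut.exists_isRestrictedCutSide [Nonempty V] {F : Set (Sym2 V)}
    (hF : IsRestrictedEdgeCut G F) :
    ∃ X : Finset V, IsRestrictedCutSide G X ∧ edgeBoundary G X ⊆ F := by
  classical
  obtain ⟨-, hdisc, hiso⟩ := hF
  obtain ⟨u, v, huv⟩ : ∃ u v, ¬(G.deleteEdges F).Reachable u v := by
    by_contra! h
    exact hdisc ⟨h⟩
  set X : Finset V := univ.filter fun w => (G.deleteEdges F).Reachable u w
  have hmem : ∀ w, w ∈ X ↔ (G.deleteEdges F).Reachable u w := by simp [X]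
  refine ⟨X, ⟨⟨u, (hmem u).mpr .rfl⟩, ⟨v, by simpa [hmem] using huv⟩, fun w hw => ?_,
    fun w hw => ?_⟩, ?_⟩
  · obtain ⟨w', hww'⟩ := hiso w
    exact ⟨w', (hmem w').mpr (((hmem w).mp hw).trans hww'.reachable), hww'.1⟩
  · obtain ⟨w', hww'⟩ := hiso w
    refine ⟨w', fun hw' => hw ((hmem w).mpr ?_), hww'.1⟩
    exact ((hmem w').mp hw').trans hww'.symm.reachable
  · rintro e ⟨he, a, ha, b, hb, rfl⟩
    by_contra heF
    have hab : (G.deleteEdges F).Adj a b := SimpleGraph.deleteEdges_adj.mpr ⟨he, heF⟩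
    exact hb ((hmem b).mpr (((hmem a).mp ha).trans hab.reachable))

lemma restrictedEdgeConn_eq_of_isRestrictedCutSide [Nonempty V] {m : ℕ} {X₀ : Finset V}
    (hX₀ : IsRestrictedCutSide G X₀) (h₀ : (edgeBoundary G X₀).ncard ≤ m)
    (h : ∀ X, IsRestrictedCutSide G X → m ≤ (edgeBoundary G X).ncard) :
    restrictedEdgeConn G = m := by
  have hmem : (edgeBoundary G X₀).ncard ∈
      {k | ∃ F : Set (Sym2 V), IsRestrictedEdgeCut G F ∧ F.ncard = k} :=
    ⟨_, hX₀.isRestrictedEdgeCut, rfl⟩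
  refine le_antisymm ((Nat.sInf_le hmem).trans h₀) (le_csInf ⟨_, hmem⟩ ?_)
  rintro k ⟨F, hF, rfl⟩
  obtain ⟨X, hX, hXF⟩ := hF.exists_isRestrictedCutSide
  exact (h X hX).trans (Set.ncard_le_ncard hXF (Set.toFinite F))

end RestrictedCut

section Cayley

variable {Γ : Type*} [Group Γ]

lemma cayleyGraph_adj_mul {S : Set Γ} (h1 : 1 ∉ S) {s : Γ} (hs : s ∈ S) (x : Γ) :
    (cayleyGraph S).Adj x (x * s) :=
  ⟨fun h => h1 (mul_eq_left.mp h.symm ▸ hs), Or.inl (by simpa using hs)⟩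

lemma cayleyGraph_adj_iff {S : Set Γ} (h1 : 1 ∉ S) (hS : ∀ s ∈ S, s⁻¹ ∈ S) {x y : Γ} :
    (cayleyGraph S).Adj x y ↔ x⁻¹ * y ∈ S := by
  refine ⟨fun ⟨_, h⟩ => h.elim id fun h => by simpa using hS _ h, fun h => ?_⟩
  simpa using cayleyGraph_adj_mul h1 h x

lemma ncard_neighborSet_cayleyGraph {S : Set Γ} (h1 : 1 ∉ S) (hS : ∀ s ∈ S, s⁻¹ ∈ S)
    (x : Γ) :
    ((cayleyGraph S).neighborSet x).ncard = S.ncard := by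
  have : (cayleyGraph S).neighborSet x = (x * ·) '' S := by
    ext y
    rw [SimpleGraph.mem_neighborSet, cayleyGraph_adj_iff h1 hS]
    refine ⟨fun h => ⟨_, h, mul_inv_cancel_left x y⟩, ?_⟩
    rintro ⟨s, hs, rfl⟩
    simpa using hs
  rw [this, Set.ncard_image_of_injective _ (mul_right_injective x)]

def cayleyGraphMulLeft (S : Set Γ) (g : Γ) : cayleyGraph S →g cayleyGraph S where
  toFun := (g * ·)
  map_rel' := fun ⟨hne, h⟩ =>
    ⟨fun h' => hne (mul_left_cancel h'), by simpa [mul_assoc] using h⟩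

@[simp]
lemma cayleyGraphMulLeft_apply (S : Set Γ) (g x : Γ) : cayleyGraphMulLeft S g x = g * x := rfl

lemma cayleyGraph_connected [Nonempty Γ] {S : Set Γ} (h1 : 1 ∉ S)
    (hgen : Subgroup.closure S = ⊤) : (cayleyGraph S).Connected := by
  have hreach : ∀ x, (cayleyGraph S).Reachable 1 x := fun x => by
    refine Subgroup.closure_induction (p := fun x _ => (cayleyGraph S).Reachable 1 x)
      (fun s hs => ?_) .rfl (fun x y _ _ hx hy => ?_) (fun x _ hx => ?_)
      (hgen ▸ Subgroup.mem_top x)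
    · simpa using (cayleyGraph_adj_mul h1 hs 1).reachable
    · exact hx.trans (by simpa using hy.map (cayleyGraphMulLeft S x))
    · simpa using (hx.map (cayleyGraphMulLeft S x⁻¹)).symm
  exact ⟨fun x y => (hreach x).symm.trans (hreach y)⟩

variable [DecidableEq Γ]

def outDarts (S X : Finset Γ) : Finset (Γ × Γ) :=
  (X ×ˢ S).filter fun p => p.1 * p.2 ∉ X

lemma mem_outDarts {S X : Finset Γ} {p : Γ × Γ} :
    p ∈ outDarts S X ↔ p.1 ∈ X ∧ p.2 ∈ S ∧ p.1 * p.2 ∉ X := by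
  simp [outDarts, and_assoc]

lemma outDarts_union (S₁ S₂ X : Finset Γ) :
    outDarts (S₁ ∪ S₂) X = outDarts S₁ X ∪ outDarts S₂ X := by
  rw [outDarts, product_union, filter_union, outDarts, outDarts]

lemma card_outDarts_le_ncard_edgeBoundary [Finite Γ] (S X : Finset Γ) :
    #(outDarts S X) ≤ (edgeBoundary (cayleyGraph (S : Set Γ)) X).ncard := by
  have hinj : Set.InjOn (fun p : Γ × Γ => s(p.1, p.1 * p.2)) (outDarts S X) := by
    rintro ⟨v, s⟩ hp ⟨v', s'⟩ hp' he
    simp only [mem_coe, mem_outDarts] at hp hp'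
    rcases Sym2.eq_iff.mp he with ⟨rfl, h⟩ | ⟨-, h⟩
    · simp_all
    · exact absurd (h ▸ hp'.1) hp.2.2
  rw [← card_image_of_injOn hinj, ← Set.ncard_coe_finset]
  refine Set.ncard_le_ncard ?_ (Set.toFinite _)
  simp only [coe_image, Set.image_subset_iff]
  rintro ⟨v, s⟩ hp
  simp only [mem_coe, mem_outDarts] at hp
  have hne : v ≠ v * s := fun h => hp.2.2 (h ▸ hp.1)
  exact ⟨⟨hne, Or.inl (by simpa using hp.2.1)⟩, v, hp.1, v * s, hp.2.2, rfl⟩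

lemma card_outDarts_compl [Fintype Γ] {S : Finset Γ} (hS : ∀ s ∈ S, s⁻¹ ∈ S)
    (X : Finset Γ) : #(outDarts S Xᶜ) = #(outDarts S X) := by
  let reverse (p : Γ × Γ) : Γ × Γ := (p.1 * p.2, p.2⁻¹)
  refine card_nbij' reverse reverse ?_ ?_ ?_ ?_ <;> intro p hp <;> simp_all [reverse, mem_outDarts]

lemma card_mul_card_le_card_outDarts_add {S : Finset Γ} (h1 : 1 ∉ S) (X : Finset Γ) :
    #X * #S ≤ #(outDarts S X) + #X * (#X - 1) := by
  have hin : #((X ×ˢ S).filter fun p => p.1 * p.2 ∈ X) ≤ #X.offDiag := by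
    refine card_le_card_of_injOn (fun p => (p.1, p.1 * p.2)) ?_ ?_
    · intro p hp
      simp only [coe_filter, mem_product, Set.mem_ofPred_eq] at hp
      simp only [coe_offDiag, Set.mem_offDiag, mem_coe, ne_eq, left_eq_mul]
      exact ⟨hp.1.1, hp.2, fun h => h1 (h ▸ hp.1.2)⟩
    · intro p _ q _ h
      simp only [Prod.mk.injEq] at h
      exact Prod.ext h.1 (mul_left_cancel (h.1 ▸ h.2))
  have hsplit := card_filter_add_card_filter_not (s := X ×ˢ S) (p := fun p => p.1 * p.2 ∉ X)
  simp only [not_not, card_product] at hsplit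
  rw [offDiag_card] at hin
  rw [outDarts, Nat.mul_sub_one]
  have : #X ≤ #X * #X := Nat.le_mul_self _
  omega

end Cayley

section Hypercube

def lampFlip : C₂ := .ofAdd 1

lemma lampFlip_mul_self : lampFlip * lampFlip = 1 := by decide

lemma lampFlip_ne_one : lampFlip ≠ 1 := by decide

lemma eq_one_or_eq_lampFlip (x : C₂) : x = 1 ∨ x = lampFlip := by
  revert x; decide

variable {ι : Type*} [DecidableEq ι]

def toggle (i : ι) : ι → C₂ := Pi.mulSingle i lampFlip

lemma toggle_mul_self (i : ι) : toggle i * toggle i = 1 := by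
  rw [toggle, ← Pi.mulSingle_mul, lampFlip_mul_self, Pi.mulSingle_one]

lemma mulSingle_eq_one_or_eq_toggle (i : ι) (x : C₂) :
    (Pi.mulSingle i x : ι → C₂) = 1 ∨ Pi.mulSingle i x = toggle i := by
  rcases eq_one_or_eq_lampFlip x with rfl | rfl
  · exact Or.inl (Pi.mulSingle_one i)
  · exact Or.inr rfl

variable [Fintype ι]

lemma mul_mem_of_forall_mul_toggle_mem {A : Finset (ι → C₂)} {J : Finset ι}
    (hA : ∀ j ∈ J, ∀ b ∈ A, b * toggle j ∈ A) {f : ι → C₂}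
    (hf : ∀ i ∉ J, f i = 1) {b : ι → C₂} (hb : b ∈ A) : b * f ∈ A := by
  have key : ∀ b ∈ A, b * ∏ i, Pi.mulSingle i (f i) ∈ A := by
    refine prod_induction _ (fun g => ∀ b ∈ A, b * g ∈ A)
      (fun g h hg hh b hb => mul_assoc b g h ▸ hh _ (hg b hb)) (by simp) fun i _ b hb => ?_
    by_cases hi : i ∈ J
    · rcases mulSingle_eq_one_or_eq_toggle i (f i) with h | h <;> rw [h]
      exacts [by simpa using hb, hA i hi b hb]
    · simpa [hf i hi] using hb
  simpa only [univ_prod_mulSingle] using key b hb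

lemma two_pow_card_le_card_of_forall_mul_toggle_mem {A : Finset (ι → C₂)} {J : Finset ι}
    (hA : ∀ j ∈ J, ∀ b ∈ A, b * toggle j ∈ A) (hne : A.Nonempty) : 2 ^ #J ≤ #A := by
  obtain ⟨a, ha⟩ := hne
  let flipOn (K : Finset ι) : ι → C₂ := fun i => if i ∈ K then lampFlip else 1
  rw [← card_powerset]
  refine card_le_card_of_injOn (fun K => a * flipOn K) (fun K hK => ?_) fun K _ K' _ h => ?_
  · refine mul_mem_of_forall_mul_toggle_mem hA (fun i hi => ?_) ha
    have : i ∉ K := fun h => hi (mem_powerset.mp hK h)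
    simp [flipOn, this]
  · ext i
    have := congrFun (mul_left_cancel h) i
    by_cases hK : i ∈ K <;> by_cases hK' : i ∈ K' <;>
      simp_all [flipOn, lampFlip_ne_one, lampFlip_ne_one.symm]

def hypercubeOutDarts (B : Finset (ι → C₂)) : Finset ((ι → C₂) × ι) :=
  (B ×ˢ univ).filter fun p => p.1 * toggle p.2 ∉ B

theorem card_le_card_hypercubeOutDarts {B : Finset (ι → C₂)} (hB : B.Nonempty)
    (hB' : B ≠ univ) : Fintype.card ι ≤ #(hypercubeOutDarts B) := by
  -- `J` collects the directions in which `B` is closed; in every other direction the darts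
  -- leaving `B` form a nonempty set closed under the toggles in `J`.
  set J := univ.filter fun j => ∀ b ∈ B, b * toggle j ∈ B
  have hJ : ∀ j ∈ J, ∀ b ∈ B, b * toggle j ∈ B := fun j hj => (mem_filter.mp hj).2
  have hJc : Jᶜ.Nonempty := by
    by_contra! h
    obtain ⟨b, hb⟩ := hB
    refine hB' (eq_univ_of_forall fun x => ?_)
    simpa using mul_mem_of_forall_mul_toggle_mem (f := b⁻¹ * x) hJ
      (fun i hi => absurd (h ▸ mem_compl.mpr hi) (notMem_empty i)) hb
  set row := fun j => B.filter fun b => b * toggle j ∉ B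
  have hrow : ∀ j ∈ Jᶜ, 2 ^ #J ≤ #(row j) := by
    intro j hj
    refine two_pow_card_le_card_of_forall_mul_toggle_mem (fun k hk b hb => ?_) ?_
    · simp only [row, mem_filter] at hb ⊢
      refine ⟨hJ k hk b hb.1, fun h => hb.2 ?_⟩
      have := hJ k hk _ h
      rwa [mul_right_comm, mul_assoc b, toggle_mul_self, mul_one] at this
    · simp only [J, mem_compl, mem_filter, mem_univ, true_and, not_forall] at hj
      obtain ⟨b, hb, hbj⟩ := hj
      exact ⟨b, mem_filter.mpr ⟨hb, hbj⟩⟩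
  have hcount : #(hypercubeOutDarts B) = ∑ j, #(row j) := by
    rw [card_eq_sum_card_fiberwise (f := Prod.snd) (t := univ) (by simp)]
    refine sum_congr rfl fun j _ => card_nbij' Prod.fst (fun b => (b, j)) ?_ ?_ ?_ ?_
    · rintro ⟨b, i⟩ hp
      simp only [hypercubeOutDarts, coe_filter, Set.mem_ofPred_eq] at hp
      obtain ⟨hb, rfl⟩ := hp
      simpa [row] using hb
    · intro b hb
      simp_all [hypercubeOutDarts, row]
    · rintro ⟨b, i⟩ hp
      simp_all [hypercubeOutDarts, row]
    · intro b hb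
      rfl
  have hm : #J < Fintype.card ι := by
    obtain ⟨j, hj⟩ := hJc
    exact card_lt_univ_of_notMem (mem_compl.mp hj)
  calc Fintype.card ι ≤ (Fintype.card ι - #J) * 2 ^ #J := by
        obtain ⟨k, hk⟩ := Nat.exists_eq_add_of_lt hm
        rw [hk, show #J + k + 1 - #J = k + 1 by omega]
        nlinarith [Nat.lt_two_pow_self (n := #J)]
    _ = ∑ j ∈ Jᶜ, 2 ^ #J := by rw [sum_const, card_compl, smul_eq_mul]
    _ ≤ ∑ j ∈ Jᶜ, #(row j) := sum_le_sum hrow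
    _ ≤ #(hypercubeOutDarts B) := hcount ▸ sum_le_sum_of_subset (subset_univ _)

end Hypercube

section Circulant

variable {Q : Type*} [Group Q] [Fintype Q] [DecidableEq Q] {T : Finset Q}

lemma card_le_card_outDarts (h1 : 1 ∉ T) (hT : ∀ t ∈ T, t⁻¹ ∈ T)
    (hc : Fintype.card Q ≤ 2 * #T) {Y : Finset Q} (hY : Y ≠ ∅) (hY' : Y ≠ univ) :
    #T ≤ #(outDarts T Y) := by
  have hk := card_mul_card_le_card_outDarts_add h1 Y
  have hj := card_mul_card_le_card_outDarts_add h1 Yᶜ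
  rw [card_outDarts_compl hT] at hj
  have hkj := card_add_card_compl Y
  have hk1 := card_pos.mpr (nonempty_iff_ne_empty.mpr hY)
  have hj1 := card_pos.mpr (nonempty_iff_ne_empty.mpr ((compl_eq_empty_iff Y).not.mpr hY'))
  zify [hk1, hj1] at hk hj
  -- the smaller of `Y` and `Yᶜ` has at most `#T` elements
  rcases le_total #Y #Yᶜ with h | h
  · have : (#Y : ℤ) ≤ #T := by omega
    nlinarith
  · have : (#Yᶜ : ℤ) ≤ #T := by omega
    nlinarith

lemma card_compl_le_card_outDarts (h1 : 1 ∉ T) (hT : ∀ t ∈ T, t⁻¹ ∈ T)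
    (hc : Fintype.card Q ≤ 2 * #T) {Y : Finset Q} (hY : 2 ≤ #Y) :
    #Yᶜ ≤ #(outDarts T Y) := by
  rcases Nat.eq_zero_or_pos #Yᶜ with h0 | hj1
  · exact h0 ▸ Nat.zero_le _
  have hk := card_mul_card_le_card_outDarts_add h1 Y
  have hj := card_mul_card_le_card_outDarts_add h1 Yᶜ
  rw [card_outDarts_compl hT] at hj
  have hkj := card_add_card_compl Y
  zify [hY.trans' one_le_two, hj1] at hk hj
  rcases le_total #Y #Yᶜ with h | h
  · have : (#Y : ℤ) ≤ #T := by omega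
    nlinarith
  · have : (#Yᶜ : ℤ) ≤ #T := by omega
    nlinarith

lemma card_le_or_card_compl_le_card_outDarts (h1 : 1 ∉ T) (hT : ∀ t ∈ T, t⁻¹ ∈ T)
    (hc : Fintype.card Q ≤ 2 * #T) (Y : Finset Q) :
    #Y ≤ #(outDarts T Y) ∨ #Yᶜ ≤ #(outDarts T Y) := by
  by_cases hY : Y = ∅
  · simp [hY]
  by_cases hY' : Y = univ
  · simp [hY']
  have := card_le_card_outDarts h1 hT hc hY hY'
  have := card_add_card_compl Y
  omega

end Circulant

section Lamplighter

open RegularWreathProduct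

instance {D Q : Type*} [Group D] [Group Q] [Fintype D] [Fintype Q] [DecidableEq Q] :
    Fintype (D ≀ᵣ Q) :=
  Fintype.ofEquiv _ (equivProd D Q).symm

instance {D Q : Type*} [Group D] [Group Q] [DecidableEq D] [Fintype Q] [DecidableEq Q] :
    DecidableEq (D ≀ᵣ Q) :=
  (equivProd D Q).decidableEq

variable {Q : Type*} [Group Q]

lemma mul_inl (v : C₂ ≀ᵣ Q) (t : Q) : v * inl t = ⟨v.left, v.right * t⟩ := by
  ext <;> simp [RegularWreathProduct.mul_def]

def lampsHom : (Q → C₂) →* C₂ ≀ᵣ Q where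
  toFun f := ⟨f, 1⟩
  map_one' := rfl
  map_mul' f g := by ext <;> simp [RegularWreathProduct.mul_def]

variable [DecidableEq Q]

def lampSwitch : C₂ ≀ᵣ Q := ⟨toggle 1, 1⟩

lemma toggle_one_comp_mul (q : Q) : (fun x => toggle (1 : Q) (q⁻¹ * x)) = toggle q := by
  ext x
  simp [toggle, Pi.mulSingle_apply, inv_mul_eq_one, eq_comm]

lemma mul_lampSwitch (v : C₂ ≀ᵣ Q) :
    v * lampSwitch = ⟨v.left * toggle v.right, v.right⟩ := by
  simp only [RegularWreathProduct.mul_def, lampSwitch, toggle_one_comp_mul, mul_one]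

lemma lampSwitch_mul_self : (lampSwitch : C₂ ≀ᵣ Q) * lampSwitch = 1 := by
  rw [mul_lampSwitch]
  exact RegularWreathProduct.ext (toggle_mul_self (1 : Q)) rfl

lemma inl_ne_lampSwitch (t : Q) : inl t ≠ (lampSwitch : C₂ ≀ᵣ Q) := fun h => by
  simpa [lampSwitch, toggle, lampFlip_ne_one.symm] using congrFun (congrArg left h) 1

variable [Fintype Q]

def lamplighterGens (T : Finset Q) : Finset (C₂ ≀ᵣ Q) := T.image inl ∪ {lampSwitch}

abbrev lamplighterCayley (T : Finset Q) : SimpleGraph (C₂ ≀ᵣ Q) :=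
  cayleyGraph (lamplighterGens T : Set (C₂ ≀ᵣ Q))

variable {T : Finset Q}

lemma mem_lamplighterGens {s : C₂ ≀ᵣ Q} :
    s ∈ lamplighterGens T ↔ (∃ t ∈ T, inl t = s) ∨ s = lampSwitch := by
  simp [lamplighterGens, or_comm]

lemma one_notMem_lamplighterGens (h1 : 1 ∉ T) : (1 : C₂ ≀ᵣ Q) ∉ lamplighterGens T := by
  rw [mem_lamplighterGens]
  rintro (⟨t, ht, h⟩ | h)
  · exact h1 ((show t = 1 from congrArg right h) ▸ ht)
  · exact lampFlip_ne_one (by simpa [lampSwitch, toggle] using (congrFun (congrArg left h) 1).symm)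

lemma inv_mem_lamplighterGens (hT : ∀ t ∈ T, t⁻¹ ∈ T) :
    ∀ s ∈ lamplighterGens T, s⁻¹ ∈ lamplighterGens T := by
  simp only [mem_lamplighterGens]
  rintro s (⟨t, ht, rfl⟩ | rfl)
  · exact Or.inl ⟨t⁻¹, hT t ht, map_inv inl t⟩
  · exact Or.inr (inv_eq_of_mul_eq_one_right lampSwitch_mul_self)

lemma card_lamplighterGens : #(lamplighterGens T) = #T + 1 := by
  rw [lamplighterGens, card_union_of_disjoint, card_image_of_injective _ ?_, card_singleton]
  · exact fun t t' h => by simpa using congrArg right h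
  · simpa using fun t _ => inl_ne_lampSwitch t

lemma closure_lamplighterGens (hgen : Subgroup.closure (T : Set Q) = ⊤) :
    Subgroup.closure (lamplighterGens T : Set (C₂ ≀ᵣ Q)) = ⊤ := by
  set H := Subgroup.closure (lamplighterGens T : Set (C₂ ≀ᵣ Q))
  have hsub : (lamplighterGens T : Set (C₂ ≀ᵣ Q)) ⊆ H := Subgroup.subset_closure
  have hinl : ∀ q, inl q ∈ H := by
    have : Subgroup.map inl (Subgroup.closure (T : Set Q)) ≤ H := by
      rw [MonoidHom.map_closure, Subgroup.closure_le]
      exact fun s ⟨t, ht, hs⟩ => hsub (mem_lamplighterGens.mpr (Or.inl ⟨t, ht, hs⟩))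
    exact fun q => this ⟨q, hgen ▸ Subgroup.mem_top q, rfl⟩
  have hswitch : lampSwitch ∈ H := hsub (mem_lamplighterGens.mpr (Or.inr rfl))
  have hlamps : ∀ f, lampsHom f ∈ H := by
    intro f
    rw [← univ_prod_mulSingle f]
    refine (H.comap (lampsHom : (Q → C₂) →* C₂ ≀ᵣ Q)).prod_mem fun q _ => ?_
    rcases mulSingle_eq_one_or_eq_toggle q (f q) with h | h <;> rw [Subgroup.mem_comap, h]
    · exact (map_one (lampsHom : (Q → C₂) →* C₂ ≀ᵣ Q)).symm ▸ H.one_mem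
    · have : lampsHom (toggle q) = inl q * lampSwitch * (inl q)⁻¹ := by
        rw [mul_lampSwitch, ← map_inv, mul_inl]
        ext <;> simp [lampsHom]
      rw [this]
      exact H.mul_mem (H.mul_mem (hinl q) hswitch) (H.inv_mem (hinl q))
  refine eq_top_iff.mpr fun v _ => ?_
  have : v = lampsHom v.left * inl v.right := by
    ext <;> simp [lampsHom, RegularWreathProduct.mul_def]
  exact this ▸ H.mul_mem (hlamps _) (hinl _)

end Lamplighter

section LowerBound

open RegularWreathProduct

variable {Q : Type*} [Group Q] [Fintype Q] [DecidableEq Q] {T : Finset Q}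

def clusterSlice (X : Finset (C₂ ≀ᵣ Q)) (a : Q → C₂) : Finset Q :=
  univ.filter fun q => ⟨a, q⟩ ∈ X

@[simp]
lemma mem_clusterSlice {X : Finset (C₂ ≀ᵣ Q)} {a : Q → C₂} {q : Q} :
    q ∈ clusterSlice X a ↔ ⟨a, q⟩ ∈ X := by
  simp [clusterSlice]

lemma clusterSlice_compl (X : Finset (C₂ ≀ᵣ Q)) (a : Q → C₂) :
    clusterSlice Xᶜ a = (clusterSlice X a)ᶜ := by
  ext; simp

lemma card_outDarts_lamplighterGens (X : Finset (C₂ ≀ᵣ Q)) :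
    #(outDarts (lamplighterGens T) X) =
      ∑ a, #(outDarts T (clusterSlice X a)) + #(outDarts {lampSwitch} X) := by
  have hdisj : Disjoint (outDarts (T.image inl) X) (outDarts {lampSwitch} X) :=
    disjoint_filter_filter (disjoint_product.mpr (Or.inr (by
      simpa using fun t _ => inl_ne_lampSwitch t)))
  rw [lamplighterGens, outDarts_union, card_union_of_disjoint hdisj,
    card_eq_sum_card_fiberwise (f := fun p => p.1.left) (t := univ) (by simp)]
  congr 1
  refine sum_congr rfl fun a _ => card_nbij' (fun p => (p.1.right, p.2.right))
    (fun p => (⟨a, p.1⟩, inl p.2)) ?_ ?_ ?_ ?_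
  · rintro ⟨v, s⟩ hp
    obtain ⟨⟨hv, ⟨t, ht, rfl⟩, hvt⟩, rfl⟩ : (_ ∧ _ ∧ _) ∧ _ := by
      simpa [mem_outDarts] using hp
    simp_all [mem_outDarts, mul_inl]
  · rintro ⟨h, t⟩ hp
    simp only [mem_coe, mem_outDarts, mem_clusterSlice] at hp
    simpa [mem_outDarts, mul_inl, hp] using ⟨t, hp.2.1, rfl⟩
  · rintro ⟨v, s⟩ hp
    obtain ⟨⟨-, ⟨t, -, rfl⟩, -⟩, rfl⟩ : (_ ∧ _ ∧ _) ∧ _ := by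
      simpa [mem_outDarts] using hp
    rfl
  · intro _ _
    rfl

lemma card_le_card_outDarts_lamplighterGens_of_full (q : Q → C₂) {X : Finset (C₂ ≀ᵣ Q)}
    (hX : ∀ v ∈ X, v.left ≠ q → clusterSlice X v.left = univ)
    (hE : ∃ a ≠ q, clusterSlice X a ≠ univ)
    (hq : #(clusterSlice X q)ᶜ ≤ #(outDarts T (clusterSlice X q))) :
    Fintype.card Q ≤ #(outDarts (lamplighterGens T) X) := by
  -- Every dart leaving the clusters `B` in the hypercube is a switch dart leaving `X`, unless it
  -- starts at a position of the cluster `q` outside `X`.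
  set B := insert q (univ.filter fun a => clusterSlice X a = univ)
  have hB : B ≠ univ := by
    obtain ⟨a, haq, ha⟩ := hE
    intro h
    have : a ∈ B := h ▸ mem_univ a
    simp [B, haq, ha] at this
  have hsplit : hypercubeOutDarts B ⊆
      (outDarts {lampSwitch} X).image (fun p => (p.1.left, p.1.right)) ∪
        (clusterSlice X q)ᶜ.image (fun h => (q, h)) := by
    rintro ⟨a, h⟩ hp
    simp only [hypercubeOutDarts, mem_filter, mem_product, mem_univ, and_true] at hp
    obtain ⟨haB, hflip⟩ := hp
    by_cases hv : (⟨a, h⟩ : C₂ ≀ᵣ Q) ∈ X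
    · refine mem_union_left _ (mem_image.mpr ⟨(⟨a, h⟩, lampSwitch), ?_, rfl⟩)
      refine mem_outDarts.mpr ⟨hv, mem_singleton_self _, fun hx => hflip ?_⟩
      rw [mul_lampSwitch] at hx
      have hne : a * toggle h ≠ q := fun he => hflip (he ▸ mem_insert_self _ _)
      simpa [B] using Or.inr (hX _ hx hne)
    · refine mem_union_right _ (mem_image.mpr ⟨h, ?_, ?_⟩)
      all_goals rcases mem_insert.mp haB with rfl | hfull
      · simpa using hv
      · exact absurd (mem_clusterSlice.mp ((mem_filter.mp hfull).2 ▸ mem_univ h)) hv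
      · rfl
      · exact absurd (mem_clusterSlice.mp ((mem_filter.mp hfull).2 ▸ mem_univ h)) hv
  have hcube := card_le_card_hypercubeOutDarts (B := B) (insert_nonempty _ _) hB
  have hle := (card_le_card hsplit).trans (card_union_le _ _)
  have h₁ := card_image_le (s := outDarts {lampSwitch} X) (f := fun p => (p.1.left, p.1.right))
  have h₂ := card_image_le (s := (clusterSlice X q)ᶜ) (f := fun h => (q, h))
  have hsum := single_le_sum (f := fun a => #(outDarts T (clusterSlice X a)))
    (fun _ _ => Nat.zero_le _) (mem_univ q)
  have := card_outDarts_lamplighterGens (T := T) X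
  omega

lemma two_le_card_clusterSlice {X : Finset (C₂ ≀ᵣ Q)}
    (hX : IsRestrictedCutSide (lamplighterCayley T) X) {q : Q → C₂}
    (hq : ∀ v ∈ X, v.left = q) : 2 ≤ #(clusterSlice X q) := by
  refine hX.one_lt_card.trans_le
    (card_le_card_of_injOn right (fun v hv => ?_) fun v hv w hw h => ?_)
  · simpa [← hq v hv] using hv
  · exact RegularWreathProduct.ext ((hq v hv).trans (hq w hw).symm) h

variable (h1 : 1 ∉ T) (hT : ∀ t ∈ T, t⁻¹ ∈ T) (hc : Fintype.card Q ≤ 2 * #T)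
include h1 hT hc

lemma card_le_card_outDarts_lamplighterGens_of_forall_left_eq {X : Finset (C₂ ≀ᵣ Q)}
    (hX : IsRestrictedCutSide (lamplighterCayley T) X) {q : Q → C₂}
    (hq : ∀ v ∈ X, v.left = q) : Fintype.card Q ≤ #(outDarts (lamplighterGens T) X) := by
  obtain ⟨a, ha⟩ := exists_ne q
  have hempty : clusterSlice X a = ∅ :=
    eq_empty_of_forall_notMem fun h hh => ha (hq _ (mem_clusterSlice.mp hh))
  exact card_le_card_outDarts_lamplighterGens_of_full q (fun v hv hvq => absurd (hq v hv) hvq)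
    ⟨a, ha, hempty ▸ (univ_neq_empty _).symm⟩
    (card_compl_le_card_outDarts h1 hT hc (two_le_card_clusterSlice hX hq))

lemma card_le_card_outDarts_lamplighterGens_of_pure {X : Finset (C₂ ≀ᵣ Q)}
    (hX : IsRestrictedCutSide (lamplighterCayley T) X) (q : Q → C₂)
    (hq : ∀ a ≠ q, clusterSlice X a = ∅ ∨ clusterSlice X a = univ) :
    Fintype.card Q ≤ #(outDarts (lamplighterGens T) X) := by
  have hfull (Z : Finset (C₂ ≀ᵣ Q))
      (hZ : ∀ a ≠ q, clusterSlice Z a = ∅ ∨ clusterSlice Z a = univ) (v : C₂ ≀ᵣ Q) (hv : v ∈ Z) (hvq : v.left ≠ q) : clusterSlice Z v.left = univ :=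
    (hZ _ hvq).resolve_left (ne_empty_of_mem (mem_clusterSlice.mpr hv))
  have hqc : ∀ a ≠ q, clusterSlice Xᶜ a = ∅ ∨ clusterSlice Xᶜ a = univ := by
    simpa [clusterSlice_compl, or_comm] using hq
  -- The cases are symmetric under `X ↦ Xᶜ`, which preserves the number of out-darts.
  have hsymm := card_outDarts_compl (inv_mem_lamplighterGens hT) X
  by_cases hE : ∃ a ≠ q, clusterSlice X a ≠ univ
  · by_cases hF : ∃ a ≠ q, clusterSlice X a ≠ ∅
    · rcases card_le_or_card_compl_le_card_outDarts h1 hT hc (clusterSlice X q) with h | h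
      · rw [← hsymm]
        refine card_le_card_outDarts_lamplighterGens_of_full q (hfull _ hqc) ?_ ?_
        · simpa [clusterSlice_compl] using hF
        · simpa [clusterSlice_compl, card_outDarts_compl hT] using h
      · exact card_le_card_outDarts_lamplighterGens_of_full q (hfull _ hq) hE h
    · push Not at hF
      refine card_le_card_outDarts_lamplighterGens_of_forall_left_eq h1 hT hc hX (q := q)
        fun v hv => ?_
      by_contra hvq
      simpa [hF _ hvq] using mem_clusterSlice.mpr hv
  · push Not at hE
    rw [← hsymm]
    refine card_le_card_outDarts_lamplighterGens_of_forall_left_eq h1 hT hc hX.compl (q := q)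
      fun v hv => ?_
    by_contra hvq
    exact mem_compl.mp hv (mem_clusterSlice.mp (hE _ hvq ▸ mem_univ v.right))

theorem card_le_card_outDarts_lamplighterGens {X : Finset (C₂ ≀ᵣ Q)}
    (hX : IsRestrictedCutSide (lamplighterCayley T) X) :
    Fintype.card Q ≤ #(outDarts (lamplighterGens T) X) := by
  by_cases hA : ∃ q₁ q₂, q₁ ≠ q₂ ∧
      ¬(clusterSlice X q₁ = ∅ ∨ clusterSlice X q₁ = univ) ∧
      ¬(clusterSlice X q₂ = ∅ ∨ clusterSlice X q₂ = univ)
  · obtain ⟨q₁, q₂, hne, hq₁, hq₂⟩ := hA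
    rw [not_or] at hq₁ hq₂
    have h₁ := card_le_card_outDarts h1 hT hc hq₁.1 hq₁.2
    have h₂ := card_le_card_outDarts h1 hT hc hq₂.1 hq₂.2
    have hsum := sum_le_sum_of_subset (f := fun a => #(outDarts T (clusterSlice X a)))
      (subset_univ {q₁, q₂})
    rw [sum_pair hne] at hsum
    have := card_outDarts_lamplighterGens (T := T) X
    omega
  obtain ⟨q, hq⟩ : ∃ q, ∀ a ≠ q, clusterSlice X a = ∅ ∨ clusterSlice X a = univ := by
    by_cases hs : ∃ q, ¬(clusterSlice X q = ∅ ∨ clusterSlice X q = univ)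
    · obtain ⟨q, hq⟩ := hs
      exact ⟨q, fun a ha => by_contra fun h => hA ⟨q, a, ha.symm, hq, h⟩⟩
    · push Not at hs
      exact ⟨1, fun a _ => hs a⟩
  exact card_le_card_outDarts_lamplighterGens_of_pure h1 hT hc hX q hq

end LowerBound

section UpperBound

open RegularWreathProduct

variable {Q : Type*} [Group Q] [Fintype Q] [DecidableEq Q] {T : Finset Q}

variable (Q) in
def lampsOff : Finset (C₂ ≀ᵣ Q) := univ.filter fun v => v.left = 1

@[simp]
lemma mem_lampsOff {v : C₂ ≀ᵣ Q} : v ∈ lampsOff Q ↔ v.left = 1 := by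
  simp [lampsOff]

lemma isRestrictedCutSide_lampsOff (h1 : 1 ∉ T) (hT₀ : T.Nonempty) :
    IsRestrictedCutSide (lamplighterCayley T) (lampsOff Q) := by
  obtain ⟨t, ht⟩ := hT₀
  have hadj (v : C₂ ≀ᵣ Q) : (lamplighterCayley T).Adj v (v * inl t) :=
    cayleyGraph_adj_mul (mem_coe.not.mpr (one_notMem_lamplighterGens h1))
      (mem_coe.mpr (mem_lamplighterGens.mpr (Or.inl ⟨t, ht, rfl⟩))) v
  refine ⟨⟨1, by simp⟩, ⟨lampSwitch, ?_⟩, fun v hv => ⟨_, ?_, hadj v⟩,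
    fun v hv => ⟨_, ?_, hadj v⟩⟩
  · exact mem_compl.mpr fun h => lampFlip_ne_one (by
      simpa [lampSwitch, toggle] using congrFun (mem_lampsOff.mp h) (1 : Q))
  all_goals simpa [mul_inl] using hv

lemma ncard_edgeBoundary_lampsOff_le (h1 : 1 ∉ T) (hT : ∀ t ∈ T, t⁻¹ ∈ T) :
    (edgeBoundary (lamplighterCayley T) (lampsOff Q : Set (C₂ ≀ᵣ Q))).ncard ≤
      Fintype.card Q := by
  have hsub : edgeBoundary (lamplighterCayley T) (lampsOff Q : Set (C₂ ≀ᵣ Q)) ⊆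
      ↑(univ.image fun q : Q => s((⟨1, q⟩ : C₂ ≀ᵣ Q), ⟨toggle q, q⟩)) := by
    rintro e ⟨he, u, hu, w, hw, rfl⟩
    rw [SimpleGraph.mem_edgeSet, lamplighterCayley, cayleyGraph_adj_iff
      (mem_coe.not.mpr (one_notMem_lamplighterGens h1)) (inv_mem_lamplighterGens hT),
      mem_coe, mem_lamplighterGens] at he
    simp only [mem_coe, mem_lampsOff, Set.mem_compl_iff] at hu hw
    rcases he with ⟨t, -, ht⟩ | hs
    · exact absurd (by rw [eq_mul_of_inv_mul_eq ht.symm, mul_inl, hu]) hw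
    · rw [eq_mul_of_inv_mul_eq hs, mul_lampSwitch, hu, one_mul]
      exact mem_coe.mpr (mem_image.mpr ⟨u.right, mem_univ _, by rw [← hu]⟩)
  refine (Set.ncard_le_ncard hsub (Set.toFinite _)).trans ?_
  rw [Set.ncard_coe_finset]
  exact card_image_le

theorem restrictedEdgeConn_lamplighterCayley (h1 : 1 ∉ T) (hT : ∀ t ∈ T, t⁻¹ ∈ T)
    (hc : Fintype.card Q ≤ 2 * #T) :
    restrictedEdgeConn (lamplighterCayley T) = Fintype.card Q := by
  have hT₀ : T.Nonempty := card_pos.mp (by have := Fintype.card_pos (α := Q); omega)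
  exact restrictedEdgeConn_eq_of_isRestrictedCutSide (isRestrictedCutSide_lampsOff h1 hT₀)
    (ncard_edgeBoundary_lampsOff_le h1 hT) fun X hX =>
      (card_le_card_outDarts_lamplighterGens h1 hT hc hX).trans
        (card_outDarts_le_ncard_edgeBoundary _ _)

end UpperBound

section PowerBall

variable {G : Type*} [Group G] [DecidableEq G]

def powerBall (g : G) (r : ℕ) : Finset G :=
  (Icc 1 r).image (g ^ ·) ∪ (Icc 1 r).image (g⁻¹ ^ ·)

variable {g : G} {r : ℕ}

lemma one_notMem_powerBall (hr : r < orderOf g) : 1 ∉ powerBall g r := by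
  simp only [powerBall, mem_union, mem_image, mem_Icc, inv_pow, inv_eq_one, or_self, not_exists,
    not_and]
  exact fun i hi => pow_ne_one_of_lt_orderOf (by omega) (by omega)

lemma inv_mem_powerBall : ∀ x ∈ powerBall g r, x⁻¹ ∈ powerBall g r := by
  simp only [powerBall, mem_union, mem_image]
  rintro x (⟨i, hi, rfl⟩ | ⟨i, hi, rfl⟩)
  · exact Or.inr ⟨i, hi, inv_pow g i⟩
  · exact Or.inl ⟨i, hi, by rw [inv_pow, inv_inv]⟩

lemma card_powerBall (hr : 2 * r < orderOf g) : #(powerBall g r) = 2 * r := by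
  have hinj : ∀ h : G, orderOf h = orderOf g → Set.InjOn (h ^ ·) (Icc 1 r : Set ℕ) :=
    fun h hh => pow_injOn_Iio_orderOf.mono fun i hi => by
      simp only [coe_Icc, Set.mem_Icc] at hi
      exact Set.mem_Iio.mpr (by omega)
  have hdisj : Disjoint ((Icc 1 r).image (g ^ ·)) ((Icc 1 r).image (g⁻¹ ^ ·)) := by
    simp only [Finset.disjoint_left, mem_image, mem_Icc, not_exists, not_and]
    rintro _ ⟨i, hi, rfl⟩ j hj h
    have := Nat.le_of_dvd (by omega) (orderOf_dvd_of_pow_eq_one (x := g) (n := i + j)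
      (by rw [pow_add, ← h, inv_pow, inv_mul_cancel]))
    omega
  rw [powerBall, card_union_of_disjoint hdisj, card_image_of_injOn (hinj g rfl),
    card_image_of_injOn (hinj g⁻¹ (orderOf_inv g)), Nat.card_Icc]
  omega

lemma closure_powerBall [Fintype G] (hr : 1 ≤ r) (hg : orderOf g = Fintype.card G) :
    Subgroup.closure (powerBall g r : Set G) = ⊤ := by
  have hgT : g ∈ powerBall g r :=
    mem_union_left _ (mem_image.mpr ⟨1, by simp [hr], pow_one g⟩)
  refine eq_top_mono (Subgroup.closure_mono (Set.singleton_subset_iff.mpr hgT)) ?_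
  rw [← Subgroup.zpowers_eq_closure]
  exact Subgroup.eq_top_of_card_eq _ (by rw [Nat.card_zpowers, hg, Nat.card_eq_fintype_card])

end PowerBall

theorem exists_cayleyGraph_restrictedEdgeConn_eq_general
    (d s : ℕ) (hodd : Odd d) (hd : 5 ≤ d) (hs2 : s ≤ d - 3) :
    ∃ (Γ : Type) (_ : Group Γ) (_ : Fintype Γ) (S : Set Γ),
      (1 : Γ) ∉ S ∧ S = S⁻¹ ∧
      (cayleyGraph S).Connected ∧
      (∀ v : Γ, ((cayleyGraph S).neighborSet v).ncard = d) ∧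
      restrictedEdgeConn (cayleyGraph S) = d + s ∧
      2 * (d + s) < Fintype.card Γ := by
  obtain ⟨r, rfl⟩ := hodd
  set c := 2 * r + 1 + s
  have : NeZero c := ⟨by omega⟩
  let g : Multiplicative (ZMod c) := .ofAdd 1
  have hg : orderOf g = c := by rw [orderOf_ofAdd_eq_addOrderOf, ZMod.addOrderOf_one]
  have h1 := one_notMem_powerBall (g := g) (r := r) (by omega)
  have hT := inv_mem_powerBall (g := g) (r := r)
  have hcard := card_powerBall (g := g) (r := r) (by omega)
  have hS1 := mem_coe.not.mpr (one_notMem_lamplighterGens h1)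
  have hS := inv_mem_lamplighterGens hT
  refine ⟨C₂ ≀ᵣ Multiplicative (ZMod c), inferInstance, inferInstance,
    lamplighterGens (powerBall g r),
    hS1, Set.ext fun x => ⟨fun h => by simpa using hS _ h, fun h => by simpa using hS _ h⟩,
    cayleyGraph_connected hS1 (closure_lamplighterGens (closure_powerBall (by omega) ?_)),
    fun v => ?_, ?_, ?_⟩
  · simp [hg]
  · rw [ncard_neighborSet_cayleyGraph hS1 hS, Set.ncard_coe_finset, card_lamplighterGens, hcard]
  · rw [restrictedEdgeConn_lamplighterCayley h1 hT (by simp; omega)]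
    simp [c]
  · rw [Fintype.card_eq_nat_card, RegularWreathProduct.card]
    simp only [Nat.card_eq_fintype_card, Fintype.card_multiplicative, ZMod.card]
    have : 3 ≤ 2 ^ c := (Nat.lt_two_pow_self (n := c)).trans_le' (by omega)
    calc 2 * c < 3 * c := by omega
      _ ≤ 2 ^ c * c := Nat.mul_le_mul_right c this

/-- Theorem 5.11. For every odd integer `d ≥ 5` and every integer `s`
with `1 ≤ s ≤ d - 3`, there exists a `d`-regular connected Cayley graph `G`
(given by a finite group `Γ` and a symmetric connection set `S` not containing the
identity) such that `λ'(G) = d + s < υ(G)/2`, where `υ(G)` is the order of `G`. -/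
theorem exists_cayleyGraph_restrictedEdgeConn_eq
    (d s : ℕ) (hodd : Odd d) (hd : 5 ≤ d) (hs1 : 1 ≤ s) (hs2 : s ≤ d - 3) :
    ∃ (Γ : Type) (_ : Group Γ) (_ : Fintype Γ) (S : Set Γ),
      (1 : Γ) ∉ S ∧ S = S⁻¹ ∧
      (cayleyGraph S).Connected ∧
      (∀ v : Γ, ((cayleyGraph S).neighborSet v).ncard = d) ∧
      restrictedEdgeConn (cayleyGraph S) = d + s ∧
      2 * (d + s) < Fintype.card Γ :=
  exists_cayleyGraph_restrictedEdgeConn_eq_general d s hodd hd hs2
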